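/- arXiv:math/9703223 — 2 statements merged into one kernel-verified Lean document; each statement's English description precedes it below -/
import Mathlib

section
/- Let K be a field of characteristic zero, T a transcendental element over K (a variable), and τ ∈ K nonzero. Then the three formal power series 1, T, and exp(τT) = Σ (τT)ⁱ/i! in K[[T]] are algebraically independent over K; equivalently, T and exp(τT) are algebraically independent over K. -/
/-!
A polynomial relation between `X` and `e^{τX}` over `K` is a `K[X]`-linear relation between the
powers `(e^{τX})^j = e^{jτX}`, i.e. between exponentials with pairwise distinct exponents. These
are linearly independent over `K[X]`, by induction on the number of terms: if
`F = ∑ c_a e^{aX} = 0`, then `c_b (F' - b F) - c_b' F = 0` is a relation in which the `b`-term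
cancels, so its coefficients `c_b (c_a' + (a - b) c_a) - c_b' c_a` vanish; comparing degrees,
this forces `c_b = 0` or `c_a = 0` for every `a ≠ b`.
-/

open Polynomial PowerSeries

theorem Polynomial.eq_zero_of_mul_derivative_add_C_mul_eq {R : Type*} [CommRing R] [IsDomain R]
    {a b : R[X]} {s : R} (ha : a ≠ 0) (hs : s ≠ 0)
    (h : a * (derivative b + C s * b) = derivative a * b) : b = 0 := by
  by_contra hb
  have h₁ : (derivative a * b).degree < (a * b).degree := by
    rw [degree_mul, degree_mul]
    exact WithBot.add_lt_add_right (degree_ne_bot.2 hb) (degree_derivative_lt ha)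
  have h₂ : (a * derivative b).degree < (a * b).degree := by
    rw [degree_mul, degree_mul]
    exact WithBot.add_lt_add_left (degree_ne_bot.2 ha) (degree_derivative_lt hb)
  have hdeg : (C s * (a * b)).degree = (a * b).degree := degree_C_mul hs
  rw [show C s * (a * b) = derivative a * b - a * derivative b by linear_combination h] at hdeg
  exact (lt_of_le_of_lt (degree_sub_le _ _) (max_lt h₁ h₂)).ne hdeg

theorem transcendental_of_linearIndependent_pow {R A : Type*} [CommRing R] [CommRing A]
    [Algebra R A] {x : A} (h : LinearIndependent R (fun n : ℕ => x ^ n)) : Transcendental R x := by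
  rw [transcendental_iff]
  intro p hp
  rw [aeval_eq_sum_range] at hp
  ext n
  rw [coeff_zero]
  rcases le_or_gt n p.natDegree with hn | hn
  · exact linearIndependent_iff'.1 h _ _ hp n (Finset.mem_range_succ_iff.2 hn)
  · exact coeff_eq_zero_of_natDegree_lt hn

namespace PowerSeries

variable {R : Type*} [CommRing R] [Algebra ℚ R]

theorem derivative_rescale_exp (a : R) :
    d⁄dX R (rescale a (exp R)) = C a * rescale a (exp R) := by
  ext n
  have h := congrArg (coeff n) (derivative_exp R)
  rw [coeff_derivative] at h
  rw [coeff_derivative, coeff_C_mul, coeff_rescale, coeff_rescale, mul_assoc, ← h, pow_succ]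
  ring

theorem rescale_exp_ne_zero [Nontrivial R] (a : R) : rescale a (exp R) ≠ 0 := by
  intro h
  simpa using congrArg (coeff 0) h

theorem rescale_exp_pow (a : R) (k : ℕ) :
    rescale a (exp R) ^ k = rescale (k * a) (exp R) := by
  rw [← map_pow, exp_pow_eq_rescale_exp, rescale_rescale]

theorem derivative_coe_mul_rescale_exp (p : R[X]) (a : R) :
    d⁄dX R (p * rescale a (exp R)) =
      ((Polynomial.derivative p + Polynomial.C a * p : R[X]) : R⟦X⟧) * rescale a (exp R) := by
  rw [Derivation.leibniz, derivative_rescale_exp, derivative_coe, smul_eq_mul, smul_eq_mul]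
  push_cast
  ring

theorem linearIndependent_rescale_exp [IsDomain R] :
    LinearIndependent R[X] (fun a : R => rescale a (exp R)) := by
  classical
  have smul_eq (p : R[X]) (f : R⟦X⟧) : p • f = (p : R⟦X⟧) * f := by
    simp [Algebra.smul_def, algebraMap_apply']
  rw [linearIndependent_iff']
  intro s
  induction s using Finset.induction_on with
  | empty => simp
  | insert b s hbs ih =>
    intro c h
    simp only [smul_eq] at h ih
    let d : R → R[X] := fun a => c b * (Polynomial.derivative (c a) + Polynomial.C (a - b) * c a)
      - Polynomial.derivative (c b) * c a
    have hd : ∑ a ∈ s, (d a : R⟦X⟧) * rescale a (exp R) = 0 := by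
      have hd_insert : ∑ a ∈ insert b s, (d a : R⟦X⟧) * rescale a (exp R) = 0 := calc
        _ = (c b : R⟦X⟧) * (d⁄dX R (∑ a ∈ insert b s, (c a : R⟦X⟧) * rescale a (exp R))
              - C b * ∑ a ∈ insert b s, (c a : R⟦X⟧) * rescale a (exp R))
            - (Polynomial.derivative (c b) : R⟦X⟧)
              * ∑ a ∈ insert b s, (c a : R⟦X⟧) * rescale a (exp R) := by
            simp only [map_sum, derivative_coe_mul_rescale_exp, Finset.mul_sum,
              ← Finset.sum_sub_distrib]
            refine Finset.sum_congr rfl fun a _ => ?_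
            simp only [d, Polynomial.C_sub]
            push_cast
            ring
        _ = 0 := by rw [h]; simp
      rwa [Finset.sum_insert hbs, show d b = 0 by simp [d]; ring, Polynomial.coe_zero, zero_mul,
        zero_add] at hd_insert
    have hcb : c b = 0 := by
      by_contra hcb
      have hcs : ∀ a ∈ s, c a = 0 := fun a ha =>
        eq_zero_of_mul_derivative_add_C_mul_eq hcb (sub_ne_zero.2 (ne_of_mem_of_not_mem ha hbs))
          (sub_eq_zero.1 (ih d hd a ha))
      rw [Finset.sum_insert hbs, Finset.sum_eq_zero fun a ha => by simp [hcs a ha], add_zero]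
        at h
      exact hcb (Polynomial.coe_eq_zero_iff.1 ((mul_eq_zero.1 h).resolve_right
        (rescale_exp_ne_zero b)))
    rw [Finset.sum_insert hbs, hcb, Polynomial.coe_zero, zero_mul, zero_add] at h
    simpa [hcb] using ih c h

theorem transcendental_rescale_exp [IsDomain R] {a : R} (ha : a ≠ 0) :
    Transcendental R[X] (rescale a (exp R)) := by
  have := algebraRat.charZero R
  refine transcendental_of_linearIndependent_pow ?_
  simp only [rescale_exp_pow]
  exact linearIndependent_rescale_exp.comp _ fun i j hij => by
    exact_mod_cast mul_right_cancel₀ ha hij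

theorem mk_pow_div_factorial_eq_rescale_exp {K : Type*} [Field K] [CharZero K] (a : K) :
    mk (fun n => a ^ n / (n.factorial : K)) = rescale a (exp K) := by
  ext n
  simp [coeff_rescale, div_eq_mul_inv]

end PowerSeries

open PowerSeries in
/-- `T` and `exp (τ T)` are algebraically independent over `K` inside `K[[T]]`. -/
theorem stmt5 {K : Type*} [Field K] [CharZero K] (τ : K) (hτ : τ ≠ 0) :
    AlgebraicIndependent K
      ![(PowerSeries.X : PowerSeries K),
        PowerSeries.mk (fun i => τ ^ i / (Nat.factorial i : K))] := by
  rw [mk_pow_div_factorial_eq_rescale_exp]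
  have hX : AlgebraicIndependent K ![(Polynomial.X : K[X])] :=
    algebraicIndependent_unique_type_iff.2 (by simpa using Polynomial.transcendental_X K)
  have hE : AlgebraicIndependent K[X] ![rescale τ (exp K)] :=
    algebraicIndependent_unique_type_iff.2 (by simpa using transcendental_rescale_exp hτ)
  convert (hX.sumElim_comp hE).comp ![Sum.inr 0, Sum.inl 0] (by decide) using 1
  ext i : 1
  fin_cases i <;> simp [algebraMap_apply']
end

section
/- Let R be the valuation ring of a non-archimedean field K with maximal ideal ℘, let B° be an R-algebra, q° a prime of B° with q° ∩ R = (0), and suppose for every b in B = B° ⊗_R K there is a nonzero π ∈ ℘ with πb ∈ B° (i.e., B° generates B over K). If q° is maximal among ideals I with q° ⊆ I ⊆ q̄ and I ∩ R = (0) for a maximal ideal q̄ of B° containing ℘B°, then q°B is a maximal ideal of B; in particular B/q°B is a field. -/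
/-!
`B = K ⊗_R B°` is the localization of `B°` at the nonzero elements of `R`, so `q°B` is maximal
as soon as `q°` is maximal among all ideals of `B°` with zero contraction to `R`, not only among
those inside `q̄`. For such an ideal `p ⊇ q°`, the ideal `p ⊓ q̄` also has zero contraction, hence
equals `q°`; since `q°` is prime and `p q̄ ⊆ p ⊓ q̄`, either `p ⊆ q°` or `q̄ ⊆ q°`, and the latter
is impossible because `q̄` contains `℘ ≠ 0` while `q°` meets `R` only in `0`.
-/

open nonZeroDivisors

theorem IsLocalization.isMaximal_map_of_forall_disjoint {A : Type*} [CommRing A]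
    (M : Submonoid A) (S : Type*) [CommRing S] [Algebra A S] [IsLocalization M S]
    {I : Ideal A} (hI : Disjoint (M : Set A) I)
    (hmax : ∀ J : Ideal A, I ≤ J → Disjoint (M : Set A) J → J = I) :
    (I.map (algebraMap A S)).IsMaximal := by
  refine Ideal.isMaximal_def.2 ⟨(map_algebraMap_ne_top_iff_disjoint M S I).2 hI, fun J hJ => ?_⟩
  by_contra hJtop
  have hJI : J.under A = I :=
    hmax _ (Ideal.map_le_iff_le_comap.1 hJ.le) ((disjoint_under_iff M S J).2 hJtop)
  exact hJ.ne (hJI ▸ map_under M S J)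

theorem Ideal.comap_eq_bot_iff_disjoint_algebraMapSubmonoid {R A : Type*} [CommRing R]
    [IsDomain R] [CommRing A] [Algebra R A] (I : Ideal A) :
    I.comap (algebraMap R A) = ⊥ ↔
      Disjoint (Algebra.algebraMapSubmonoid A R⁰ : Set A) I := by
  simp only [Set.disjoint_left, Algebra.algebraMapSubmonoid, Submonoid.coe_map,
    Set.mem_image, SetLike.mem_coe, mem_nonZeroDivisors_iff_ne_zero, eq_bot_iff,
    SetLike.le_def, Ideal.mem_comap, Ideal.mem_bot]
  constructor
  · rintro h _ ⟨r, hr, rfl⟩ hrI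
    exact hr (h hrI)
  · intro h r hrI
    by_contra hr
    exact h ⟨r, hr, rfl⟩ hrI

theorem Ideal.IsPrime.eq_of_le_of_comap_eq_bot {R A : Type*} [CommRing R] [CommRing A]
    {f : R →+* A} {q qbar p : Ideal A} (hq : q.IsPrime) (hqqbar : q ≤ qbar)
    (hqbar : ¬ qbar ≤ q)
    (hmax : ∀ I : Ideal A, q ≤ I → I ≤ qbar → I.comap f = ⊥ → I = q)
    (hqp : q ≤ p) (hp : p.comap f = ⊥) : p = q := by
  have hinf : p ⊓ qbar = q :=
    hmax _ (le_inf hqp hqqbar) inf_le_right (eq_bot_iff.2 (hp ▸ Ideal.comap_mono inf_le_left))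
  have hmul : p * qbar ≤ q := Ideal.mul_le_inf.trans hinf.le
  exact le_antisymm ((hq.mul_le.1 hmul).resolve_right hqbar) hqp

open TensorProduct in
theorem stmt10_general {R : Type*} [CommRing R] [IsDomain R] [ValuationRing R]
    (hp : IsLocalRing.maximalIdeal R ≠ ⊥)
    {B0 : Type*} [CommRing B0] [Algebra R B0]
    (qbar : Ideal B0)
    (hwpq : (IsLocalRing.maximalIdeal R).map (algebraMap R B0) ≤ qbar)
    (q : Ideal B0) (hqprime : q.IsPrime) (hqR : q.comap (algebraMap R B0) = ⊥)
    (hq : q ≤ qbar)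
    (hmax : ∀ I : Ideal B0, q ≤ I → I ≤ qbar →
      I.comap (algebraMap R B0) = ⊥ → I = q) :
    (q.map (Algebra.TensorProduct.includeRight
        (R := R) (A := FractionRing R) (B := B0)).toRingHom).IsMaximal := by
  -- makes `IsLocalization.tensorRight` apply, with `algebraMap B0 _` equal to `includeRight`
  let _ : Algebra B0 (FractionRing R ⊗[R] B0) := Algebra.TensorProduct.rightAlgebra
  have hqbar_not_le : ¬ qbar ≤ q := fun h => by
    obtain ⟨π, hπ, hπ0⟩ := Submodule.exists_mem_ne_zero_of_ne_bot hp
    have : π ∈ q.comap (algebraMap R B0) := h (hwpq (Ideal.mem_map_of_mem _ hπ))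
    rw [hqR] at this
    exact hπ0 this
  exact IsLocalization.isMaximal_map_of_forall_disjoint
    (Algebra.algebraMapSubmonoid B0 R⁰) (FractionRing R ⊗[R] B0)
    ((Ideal.comap_eq_bot_iff_disjoint_algebraMapSubmonoid q).1 hqR)
    fun J hqJ hJ => hqprime.eq_of_le_of_comap_eq_bot hq hqbar_not_le hmax hqJ
      ((Ideal.comap_eq_bot_iff_disjoint_algebraMapSubmonoid J).2 hJ)

open TensorProduct in
/-- Step in Lemma 4.2: if `q°` is maximal among ideals below `q̄` with zero
contraction to `R`, then `q°B` is a maximal ideal of `B = B° ⊗_R K`. -/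
theorem stmt10 {R : Type*} [CommRing R] [IsDomain R] [ValuationRing R]
    (hp : IsLocalRing.maximalIdeal R ≠ ⊥)
    {B0 : Type*} [CommRing B0] [Algebra R B0] [Module.Flat R B0]
    (hgen : ∀ b : (FractionRing R) ⊗[R] B0,
      ∃ π : R, π ≠ 0 ∧ π ∈ IsLocalRing.maximalIdeal R ∧
        ∃ b0 : B0, π • b = Algebra.TensorProduct.includeRight b0)
    (qbar : Ideal B0) (hqbar : qbar.IsMaximal)
    (hwpq : (IsLocalRing.maximalIdeal R).map (algebraMap R B0) ≤ qbar)
    (q : Ideal B0) (hqprime : q.IsPrime) (hqR : q.comap (algebraMap R B0) = ⊥)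
    (hq : q ≤ qbar)
    (hmax : ∀ I : Ideal B0, q ≤ I → I ≤ qbar →
      I.comap (algebraMap R B0) = ⊥ → I = q) :
    (q.map (Algebra.TensorProduct.includeRight
        (R := R) (A := FractionRing R) (B := B0)).toRingHom).IsMaximal :=
  stmt10_general hp qbar hwpq q hqprime hqR hq hmax
end
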